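/- (Theorem 1) Let ψ and φ be probability vectors with sorted entries α_1 ≥ … ≥ α_n ≥ 0 and β_1 ≥ … ≥ β_n ≥ 0 respectively, and let c be a probability vector with sorted entries γ_1 ≥ … ≥ γ_k > 0, where k ≥ 2. If c is a multiple-copy catalyst for the transformation of ψ to φ, i.e. there exists an integer m ≥ 1 such that ψ⊗c^{⊗m} is majorized by φ⊗c^{⊗m}, then for every l ∈ L_{ψ,φ}: γ_1·β_l < β_1·γ_2 (i.e. γ_1/γ_2 < β_1/β_l) and γ_{k−1}·β_n < β_{l+1}·γ_k (i.e. γ_{k−1}/γ_k < β_{l+1}/β_n). -/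

import Mathlib

open Finset

/-- Sum of the `l` largest entries of `x` (maximum over subsets of size `l`),
counted with multiplicity: this is `S_l(x)` from the paper. -/
noncomputable def topSum {ι : Type*} [Fintype ι] (x : ι → ℝ) (l : ℕ) : ℝ :=
  sSup {s : ℝ | ∃ A : Finset ι, A.card = l ∧ s = ∑ i ∈ A, x i}

/-- Sum of the `l` smallest entries of `x` (minimum over subsets of size `l`). -/
noncomputable def botSum {ι : Type*} [Fintype ι] (x : ι → ℝ) (l : ℕ) : ℝ :=
  sInf {s : ℝ | ∃ A : Finset ι, A.card = l ∧ s = ∑ i ∈ A, x i}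

/-- `x` is majorized by `y` (written `x ≺ y`): for every `1 ≤ l ≤ N`,
the sum of the `l` largest entries of `x` is at most that of `y`. -/
def Majorized {ι : Type*} [Fintype ι] (x y : ι → ℝ) : Prop :=
  ∀ l : ℕ, 1 ≤ l → l ≤ Fintype.card ι → topSum x l ≤ topSum y l

/-- Tensor product of two vectors: all pairwise products of entries. -/
def tensor {ι κ : Type*} (x : ι → ℝ) (z : κ → ℝ) : ι × κ → ℝ :=
  fun p => x p.1 * z p.2

/-- `p`-fold tensor power of a vector. -/
def tensorPow {ι : Type*} (x : ι → ℝ) (p : ℕ) : (Fin p → ι) → ℝ :=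
  fun f => ∏ j, x (f j)

/-- Sum of the first `l` entries of a vector `x : Fin n → ℝ`. -/
def prefixSum {n : ℕ} (x : Fin n → ℝ) (l : ℕ) : ℝ :=
  ∑ j ∈ Finset.univ.filter (fun j : Fin n => (j : ℕ) < l), x j

/-- Sum of the entries of `x : Fin n → ℝ` from index `l` (0-based) on. -/
def suffixSum {n : ℕ} (x : Fin n → ℝ) (l : ℕ) : ℝ :=
  ∑ j ∈ Finset.univ.filter (fun j : Fin n => l ≤ (j : ℕ)), x j

/-- `E_l(x) = 1 - S_{l-1}(x)`: the sum of the entries of the probability vector `x`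
from the `l`-th largest to the smallest. -/
noncomputable def Evec {ι : Type*} [Fintype ι] (x : ι → ℝ) (l : ℕ) : ℝ :=
  1 - topSum x (l - 1)

/-- Vidal conversion probability `P(x → y) = min_{1 ≤ l ≤ N} E_l(x)/E_l(y)`. -/
noncomputable def vidalP {ι : Type*} [Fintype ι] (x y : ι → ℝ) : ℝ :=
  sInf {r : ℝ | ∃ l : ℕ, 1 ≤ l ∧ l ≤ Fintype.card ι ∧ r = Evec x l / Evec y l}

/-- Nonincreasing rearrangement of the entries of `x`, as a list. -/
noncomputable def sortedDesc {ι : Type*} [Fintype ι] (x : ι → ℝ) : List ℝ :=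
  ((Finset.univ.val.map x).sort (· ≤ ·)).reverse

-- helpers
lemma le_topSum' {ι : Type*} [Fintype ι] (x : ι → ℝ) (l : ℕ) (A : Finset ι) (hA : A.card = l) :
    ∑ i ∈ A, x i ≤ topSum x l := by
  have hmem : (∑ i ∈ A, x i) ∈ {s : ℝ | ∃ A : Finset ι, A.card = l ∧ s = ∑ i ∈ A, x i} :=
    ⟨A, hA, rfl⟩
  apply le_csSup _ hmem
  have he : {s : ℝ | ∃ A : Finset ι, A.card = l ∧ s = ∑ i ∈ A, x i}
      = (fun A : Finset ι => ∑ i ∈ A, x i) '' {A | A.card = l} := by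
    ext s
    constructor
    · rintro ⟨A, h1, h2⟩; exact ⟨A, h1, h2.symm⟩
    · rintro ⟨A, h1, h2⟩; exact ⟨A, h1, h2.symm⟩
  rw [he]
  exact ((Set.toFinite _).image _).bddAbove

lemma topSum_le' {ι : Type*} [Fintype ι] (x : ι → ℝ) (l : ℕ) (hl : l ≤ Fintype.card ι) (c : ℝ)
    (h : ∀ A : Finset ι, A.card = l → ∑ i ∈ A, x i ≤ c) : topSum x l ≤ c := by
  apply csSup_le
  · obtain ⟨A, _, hA⟩ := Finset.exists_subset_card_eq (by simpa using hl : l ≤ (Finset.univ : Finset ι).card)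
    exact ⟨_, A, hA, rfl⟩
  · rintro s ⟨A, h1, rfl⟩; exact h A h1

lemma sum_min_le' {ι : Type*} [DecidableEq ι] {v : ι → ℝ} {B : Finset ι}
    (h : ∀ b ∈ B, ∀ a ∉ B, v b ≤ v a) :
    ∀ A : Finset ι, A.card = B.card → ∑ i ∈ B, v i ≤ ∑ i ∈ A, v i := by
  intro A hcard
  have hc : (B \ A).card = (A \ B).card := by
    have h1 := Finset.card_sdiff_add_card_inter B A
    have h2 := Finset.card_sdiff_add_card_inter A B
    rw [Finset.inter_comm] at h2
    omega
  have key : ∑ i ∈ B \ A, v i ≤ ∑ i ∈ A \ B, v i := by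
    rcases Finset.eq_empty_or_nonempty (A \ B) with he | hne
    · have hBA : B \ A = ∅ := Finset.card_eq_zero.mp (by rw [hc, he]; simp)
      simp [hBA, he]
    · obtain ⟨a₀, ha₀, hmin⟩ := Finset.exists_min_image (A \ B) v hne
      have hb : ∑ i ∈ B \ A, v i ≤ (B \ A).card • v a₀ := by
        apply Finset.sum_le_card_nsmul
        intro b hbb
        exact h b (Finset.mem_sdiff.mp hbb).1 a₀ (Finset.mem_sdiff.mp ha₀).2
      have ha : (A \ B).card • v a₀ ≤ ∑ i ∈ A \ B, v i :=
        Finset.card_nsmul_le_sum _ _ _ (fun a haa => hmin a haa)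
      rw [hc] at hb
      linarith
  have hB : ∑ i ∈ B, v i = ∑ i ∈ B \ A, v i + ∑ i ∈ B ∩ A, v i := by
    rw [← Finset.sum_sdiff (Finset.inter_subset_left), Finset.sdiff_inter_self_left]
  have hA : ∑ i ∈ A, v i = ∑ i ∈ A \ B, v i + ∑ i ∈ B ∩ A, v i := by
    rw [Finset.inter_comm, ← Finset.sum_sdiff (Finset.inter_subset_left),
      Finset.sdiff_inter_self_left]
  linarith

lemma sum_le_max' {ι : Type*} [DecidableEq ι] {v : ι → ℝ} {B : Finset ι}
    (h : ∀ b ∈ B, ∀ a ∉ B, v a ≤ v b) :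
    ∀ A : Finset ι, A.card = B.card → ∑ i ∈ A, v i ≤ ∑ i ∈ B, v i := by
  intro A hA
  have := sum_min_le' (v := fun i => -v i) (B := B)
    (fun b hb a ha => neg_le_neg (h b hb a ha)) A hA
  simp only [Finset.sum_neg_distrib] at this
  linarith

lemma sum_tensorPow' {k m : ℕ} (γ : Fin k → ℝ) (h1 : ∑ i, γ i = 1) :
    ∑ f : Fin m → Fin k, tensorPow γ m f = 1 := by
  unfold tensorPow
  rw [← Fintype.piFinset_univ, Finset.sum_prod_piFinset]
  simp [h1]

lemma sum_tensor' {n k m : ℕ} (x : Fin n → ℝ) (γ : Fin k → ℝ)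
    (hx : ∑ i, x i = 1) (hγ : ∑ i, γ i = 1) :
    ∑ p : Fin n × (Fin m → Fin k), tensor x (tensorPow γ m) p = 1 := by
  unfold tensor
  rw [Fintype.sum_prod_type]
  simp only [← Finset.mul_sum]
  rw [sum_tensorPow' γ hγ]
  simpa using hx

lemma card_filter_lt' {n l : ℕ} (h : l ≤ n) :
    (Finset.univ.filter (fun j : Fin n => (j : ℕ) < l)).card = l := by
  have he : Finset.univ.filter (fun j : Fin n => (j : ℕ) < l)
      = (Finset.range l).attachFin
        (fun m hm => lt_of_lt_of_le (Finset.mem_range.mp hm) h) := by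
    ext j; simp [Finset.mem_attachFin]
  rw [he, Finset.card_attachFin, Finset.card_range]

lemma card_filter_ge' {n l : ℕ} (h : l ≤ n) :
    (Finset.univ.filter (fun j : Fin n => l ≤ (j : ℕ))).card = n - l := by
  have he : Finset.univ.filter (fun j : Fin n => l ≤ (j : ℕ))
      = (Finset.univ.filter (fun j : Fin n => (j : ℕ) < l))ᶜ := by
    ext j; simp [not_lt]
  rw [he, Finset.card_compl, card_filter_lt' h, Fintype.card_fin]

lemma tensorPow_nonneg' {k m : ℕ} (γ : Fin k → ℝ) (h : ∀ i, 0 ≤ γ i) (f : Fin m → Fin k) :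
    0 ≤ tensorPow γ m f := Finset.prod_nonneg fun i _ => h _

lemma tensorPow_le_top' {k m : ℕ} (hk : 2 ≤ k) (γ : Fin k → ℝ) (hγa : Antitone γ)
    (hγ0 : ∀ i, 0 ≤ γ i) (f : Fin m → Fin k) (i₀ : Fin m)
    (hi₀ : f i₀ ≠ ⟨0, by omega⟩) :
    tensorPow γ m f ≤ γ ⟨1, by omega⟩ * γ ⟨0, by omega⟩ ^ (m - 1) := by
  unfold tensorPow
  rw [← Finset.mul_prod_erase Finset.univ _ (Finset.mem_univ i₀)]
  have h1 : γ (f i₀) ≤ γ ⟨1, by omega⟩ := by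
    apply hγa
    have hv : (f i₀).val ≠ 0 := fun hv => hi₀ (Fin.ext hv)
    rw [Fin.le_def]
    simp only []
    omega
  have h2 : ∏ j ∈ Finset.univ.erase i₀, γ (f j) ≤ γ ⟨0, by omega⟩ ^ (m - 1) := by
    calc ∏ j ∈ Finset.univ.erase i₀, γ (f j)
        ≤ ∏ _j ∈ Finset.univ.erase i₀, γ ⟨0, by omega⟩ :=
          Finset.prod_le_prod (fun i _ => hγ0 _) (fun i _ => hγa (by simp [Fin.le_def]))
      _ = γ ⟨0, by omega⟩ ^ (m - 1) := by
          rw [Finset.prod_const, Finset.card_erase_of_mem (Finset.mem_univ i₀)]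
          simp
  exact mul_le_mul h1 h2 (Finset.prod_nonneg fun i _ => hγ0 _) (hγ0 _)

lemma bot_le_tensorPow' {k m : ℕ} (hk : 2 ≤ k) (γ : Fin k → ℝ) (hγa : Antitone γ)
    (hγ0 : ∀ i, 0 ≤ γ i) (f : Fin m → Fin k) (i₀ : Fin m)
    (hi₀ : f i₀ ≠ ⟨k - 1, by omega⟩) :
    γ ⟨k - 2, by omega⟩ * γ ⟨k - 1, by omega⟩ ^ (m - 1) ≤ tensorPow γ m f := by
  unfold tensorPow
  rw [← Finset.mul_prod_erase Finset.univ _ (Finset.mem_univ i₀)]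
  have h1 : γ ⟨k - 2, by omega⟩ ≤ γ (f i₀) := by
    apply hγa
    have hlt := (f i₀).isLt
    have hv : (f i₀).val ≠ k - 1 := fun hv => hi₀ (Fin.ext hv)
    rw [Fin.le_def]
    simp only []
    omega
  have h2 : γ ⟨k - 1, by omega⟩ ^ (m - 1) ≤ ∏ j ∈ Finset.univ.erase i₀, γ (f j) := by
    calc γ ⟨k - 1, by omega⟩ ^ (m - 1)
        = ∏ _j ∈ Finset.univ.erase i₀, γ ⟨k - 1, by omega⟩ := by
          rw [Finset.prod_const, Finset.card_erase_of_mem (Finset.mem_univ i₀)]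
          simp
      _ ≤ ∏ j ∈ Finset.univ.erase i₀, γ (f j) := by
          apply Finset.prod_le_prod (fun i _ => hγ0 _)
          intro i _
          apply hγa
          have := (f i).isLt
          rw [Fin.le_def]
          simp only []
          omega
  exact mul_le_mul h1 h2 (pow_nonneg (hγ0 _) _) (hγ0 _)

theorem stmt_6 {n k : ℕ} (hk : 2 ≤ k) (ψ φ : Fin n → ℝ) (γ : Fin k → ℝ)
    (hψa : Antitone ψ) (hφa : Antitone φ) (hγa : Antitone γ)
    (hψ0 : ∀ i, 0 ≤ ψ i) (hψ1 : ∑ i, ψ i = 1)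
    (hφ0 : ∀ i, 0 ≤ φ i) (hφ1 : ∑ i, φ i = 1)
    (hγ0 : ∀ i, 0 < γ i) (hγ1 : ∑ i, γ i = 1)
    (hcat : ∃ m : ℕ, 1 ≤ m ∧
      Majorized (tensor ψ (tensorPow γ m)) (tensor φ (tensorPow γ m))) :
    ∀ l : ℕ, ∀ _hl1 : 1 ≤ l, ∀ hln : l < n,
      prefixSum ψ l > prefixSum φ l →
      γ ⟨0, by omega⟩ * φ ⟨l - 1, by omega⟩ < φ ⟨0, by omega⟩ * γ ⟨1, by omega⟩ ∧
      γ ⟨k - 2, by omega⟩ * φ ⟨n - 1, by omega⟩ < φ ⟨l, hln⟩ * γ ⟨k - 1, by omega⟩ := by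
  obtain ⟨m, hm1, hmaj⟩ := hcat
  intro l hl1 hln hgt
  have hγ0' : ∀ i, 0 ≤ γ i := fun i => (hγ0 i).le
  have hkm : k ≤ k ^ m := Nat.le_self_pow (by omega) k
  have hnk : 2 * n ≤ n * k ^ m := by
    have : n * 2 ≤ n * k ^ m := Nat.mul_le_mul_left n (by omega)
    omega
  have hcard : Fintype.card (Fin n × (Fin m → Fin k)) = n * k ^ m := by
    simp [Fintype.card_fun]
  have hTc0 : ∀ c : Fin k, tensorPow γ m (fun _ : Fin m => c) = γ c ^ m := by
    intro c; simp [tensorPow]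
  have hT0 : ∀ f, 0 ≤ tensorPow γ m f := tensorPow_nonneg' γ hγ0'
  have hBsum : ∀ (x : Fin n → ℝ) (c : Fin k) (q : Fin n → Prop) [DecidablePred q],
      ∑ p ∈ (Finset.univ.filter q).image (fun j => (j, fun _ : Fin m => c)),
        tensor x (tensorPow γ m) p
      = (∑ j ∈ Finset.univ.filter q, x j) * γ c ^ m := by
    intro x c q _
    have hinj : Function.Injective (fun j : Fin n => (j, fun _ : Fin m => c)) :=
      fun a b hab => (Prod.ext_iff.mp hab).1
    rw [Finset.sum_image (fun a _ b _ hab => hinj hab), Finset.sum_mul]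
    apply Finset.sum_congr rfl
    intro j _
    simp [tensor, hTc0]
  constructor
  · -- part (i)
    by_contra hcon
    push_neg at hcon
    have hinj : Function.Injective
        (fun j : Fin n => (j, fun _ : Fin m => (⟨0, by omega⟩ : Fin k))) :=
      fun a b hab => (Prod.ext_iff.mp hab).1
    set B : Finset (Fin n × (Fin m → Fin k)) :=
      (Finset.univ.filter (fun j : Fin n => (j : ℕ) < l)).image
        (fun j => (j, fun _ : Fin m => (⟨0, by omega⟩ : Fin k))) with hB
    have hBcard : B.card = l := by
      rw [hB, Finset.card_image_of_injective _ hinj, card_filter_lt' hln.le]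
    have hmax : ∀ b ∈ B, ∀ a ∉ B,
        tensor φ (tensorPow γ m) a ≤ tensor φ (tensorPow γ m) b := by
      intro b hb a ha
      rw [hB, Finset.mem_image] at hb
      obtain ⟨j, hj, rfl⟩ := hb
      have hjl : (j : ℕ) < l := (Finset.mem_filter.mp hj).2
      by_cases hf : a.2 = (fun _ : Fin m => (⟨0, by omega⟩ : Fin k))
      · have hal : ¬ ((a.1 : ℕ) < l) := by
          intro hcontra
          apply ha
          rw [hB, Finset.mem_image]
          refine ⟨a.1, Finset.mem_filter.mpr ⟨Finset.mem_univ _, hcontra⟩, ?_⟩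
          rw [← hf]
        have hva : tensor φ (tensorPow γ m) a = φ a.1 * γ ⟨0, by omega⟩ ^ m := by
          show φ a.1 * tensorPow γ m a.2 = _
          rw [hf, hTc0]
        rw [hva]
        show _ ≤ φ j * tensorPow γ m (fun _ => (⟨0, by omega⟩ : Fin k))
        rw [hTc0]
        apply mul_le_mul_of_nonneg_right _ (pow_nonneg (hγ0' _) _)
        exact hφa (by simp only [Fin.le_def, Fin.val_mk]; omega)
      · obtain ⟨i₀, hi₀⟩ := Function.ne_iff.mp hf
        have h1 := tensorPow_le_top' hk γ hγa hγ0' a.2 i₀ hi₀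
        have h2 : tensor φ (tensorPow γ m) a
            ≤ φ ⟨0, by omega⟩ * (γ ⟨1, by omega⟩ * γ ⟨0, by omega⟩ ^ (m - 1)) := by
          apply mul_le_mul _ h1 (hT0 _) (hφ0 _)
          exact hφa (by simp only [Fin.le_def, Fin.val_mk]; omega)
        have h4 : γ (⟨0, by omega⟩ : Fin k) * γ (⟨0, by omega⟩ : Fin k) ^ (m - 1)
            = γ (⟨0, by omega⟩ : Fin k) ^ m := by
          rw [← pow_succ']
          congr 1
          omega
        have h5 : φ (⟨l - 1, by omega⟩ : Fin n) ≤ φ j :=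
          hφa (by simp only [Fin.le_def, Fin.val_mk]; omega)
        have hvb : tensor φ (tensorPow γ m) (j, fun _ => (⟨0, by omega⟩ : Fin k))
            = φ j * γ ⟨0, by omega⟩ ^ m := by
          show φ j * tensorPow γ m _ = _
          rw [hTc0]
        rw [hvb]
        have hγm : (0:ℝ) ≤ γ ⟨0, by omega⟩ ^ (m - 1) := pow_nonneg (hγ0' _) _
        calc tensor φ (tensorPow γ m) a
            ≤ φ ⟨0, by omega⟩ * (γ ⟨1, by omega⟩ * γ ⟨0, by omega⟩ ^ (m - 1)) := h2
          _ = φ ⟨0, by omega⟩ * γ ⟨1, by omega⟩ * γ ⟨0, by omega⟩ ^ (m - 1) := by ring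
          _ ≤ γ ⟨0, by omega⟩ * φ ⟨l - 1, by omega⟩ * γ ⟨0, by omega⟩ ^ (m - 1) :=
              mul_le_mul_of_nonneg_right hcon hγm
          _ = φ ⟨l - 1, by omega⟩ * (γ ⟨0, by omega⟩ * γ ⟨0, by omega⟩ ^ (m - 1)) := by ring
          _ = φ ⟨l - 1, by omega⟩ * γ ⟨0, by omega⟩ ^ m := by rw [h4]
          _ ≤ φ j * γ ⟨0, by omega⟩ ^ m :=
              mul_le_mul_of_nonneg_right h5 (pow_nonneg (hγ0' _) _)
    have hlcard : l ≤ Fintype.card (Fin n × (Fin m → Fin k)) := by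
      rw [hcard]; omega
    have hub : topSum (tensor φ (tensorPow γ m)) l ≤ prefixSum φ l * γ ⟨0, by omega⟩ ^ m := by
      have := hBsum φ ⟨0, by omega⟩ (fun j : Fin n => (j : ℕ) < l)
      rw [prefixSum, ← this]
      apply topSum_le' _ _ hlcard
      intro A hA
      exact sum_le_max' hmax A (by rw [hA, hBcard])
    have hlb : prefixSum ψ l * γ ⟨0, by omega⟩ ^ m ≤ topSum (tensor ψ (tensorPow γ m)) l := by
      have := hBsum ψ ⟨0, by omega⟩ (fun j : Fin n => (j : ℕ) < l)
      rw [prefixSum, ← this]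
      exact le_topSum' _ _ B hBcard
    have hmm := hmaj l hl1 hlcard
    have hp : (0:ℝ) < γ ⟨0, by omega⟩ ^ m := pow_pos (hγ0 _) m
    nlinarith
  · -- part (ii)
    by_contra hcon
    push_neg at hcon
    have hinj : Function.Injective
        (fun j : Fin n => (j, fun _ : Fin m => (⟨k - 1, by omega⟩ : Fin k))) :=
      fun a b hab => (Prod.ext_iff.mp hab).1
    set B : Finset (Fin n × (Fin m → Fin k)) :=
      (Finset.univ.filter (fun j : Fin n => l ≤ (j : ℕ))).image
        (fun j => (j, fun _ : Fin m => (⟨k - 1, by omega⟩ : Fin k))) with hB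
    have hBcard : B.card = n - l := by
      rw [hB, Finset.card_image_of_injective _ hinj, card_filter_ge' hln.le]
    have hmin : ∀ b ∈ B, ∀ a ∉ B,
        tensor φ (tensorPow γ m) b ≤ tensor φ (tensorPow γ m) a := by
      intro b hb a ha
      rw [hB, Finset.mem_image] at hb
      obtain ⟨j, hj, rfl⟩ := hb
      have hjl : l ≤ (j : ℕ) := (Finset.mem_filter.mp hj).2
      have hvb : tensor φ (tensorPow γ m) (j, fun _ => (⟨k - 1, by omega⟩ : Fin k))
          = φ j * γ ⟨k - 1, by omega⟩ ^ m := by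
        show φ j * tensorPow γ m _ = _
        rw [hTc0]
      rw [hvb]
      by_cases hf : a.2 = (fun _ : Fin m => (⟨k - 1, by omega⟩ : Fin k))
      · have hal : ¬ (l ≤ (a.1 : ℕ)) := by
          intro hcontra
          apply ha
          rw [hB, Finset.mem_image]
          refine ⟨a.1, Finset.mem_filter.mpr ⟨Finset.mem_univ _, hcontra⟩, ?_⟩
          rw [← hf]
        have hva : tensor φ (tensorPow γ m) a = φ a.1 * γ ⟨k - 1, by omega⟩ ^ m := by
          show φ a.1 * tensorPow γ m a.2 = _
          rw [hf, hTc0]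
        rw [hva]
        apply mul_le_mul_of_nonneg_right _ (pow_nonneg (hγ0' _) _)
        exact hφa (by simp only [Fin.le_def, Fin.val_mk]; omega)
      · obtain ⟨i₀, hi₀⟩ := Function.ne_iff.mp hf
        have h1 := bot_le_tensorPow' hk γ hγa hγ0' a.2 i₀ hi₀
        have h4 : γ (⟨k - 1, by omega⟩ : Fin k) * γ (⟨k - 1, by omega⟩ : Fin k) ^ (m - 1)
            = γ (⟨k - 1, by omega⟩ : Fin k) ^ m := by
          rw [← pow_succ']
          congr 1
          omega
        have hγm : (0:ℝ) ≤ γ ⟨k - 1, by omega⟩ ^ (m - 1) := pow_nonneg (hγ0' _) _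
        have ha1 : (a.1 : ℕ) < n := a.1.isLt
        calc φ j * γ ⟨k - 1, by omega⟩ ^ m
            ≤ φ ⟨l, hln⟩ * γ ⟨k - 1, by omega⟩ ^ m :=
              mul_le_mul_of_nonneg_right (hφa (by simp only [Fin.le_def, Fin.val_mk]; omega))
                (pow_nonneg (hγ0' _) _)
          _ = φ ⟨l, hln⟩ * γ ⟨k - 1, by omega⟩ * γ ⟨k - 1, by omega⟩ ^ (m - 1) := by
              rw [mul_assoc, h4]
          _ ≤ γ ⟨k - 2, by omega⟩ * φ ⟨n - 1, by omega⟩ * γ ⟨k - 1, by omega⟩ ^ (m - 1) :=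
              mul_le_mul_of_nonneg_right hcon hγm
          _ = φ ⟨n - 1, by omega⟩ * (γ ⟨k - 2, by omega⟩ * γ ⟨k - 1, by omega⟩ ^ (m - 1)) := by
              ring
          _ ≤ φ a.1 * (γ ⟨k - 2, by omega⟩ * γ ⟨k - 1, by omega⟩ ^ (m - 1)) := by
              apply mul_le_mul_of_nonneg_right (hφa (by simp only [Fin.le_def, Fin.val_mk]; omega))
              exact mul_nonneg (hγ0' _) (pow_nonneg (hγ0' _) _)
          _ ≤ φ a.1 * tensorPow γ m a.2 :=
              mul_le_mul_of_nonneg_left h1 (hφ0 _)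
          _ = tensor φ (tensorPow γ m) a := rfl
    have htotφ : ∑ p : Fin n × (Fin m → Fin k), tensor φ (tensorPow γ m) p = 1 :=
      sum_tensor' φ γ hφ1 hγ1
    have htotψ : ∑ p : Fin n × (Fin m → Fin k), tensor ψ (tensorPow γ m) p = 1 :=
      sum_tensor' ψ γ hψ1 hγ1
    have hMcard : n * k ^ m - (n - l) ≤ Fintype.card (Fin n × (Fin m → Fin k)) := by
      rw [hcard]; omega
    have hM1 : 1 ≤ n * k ^ m - (n - l) := by omega
    have hub : topSum (tensor φ (tensorPow γ m)) (n * k ^ m - (n - l))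
        ≤ 1 - suffixSum φ l * γ ⟨k - 1, by omega⟩ ^ m := by
      apply topSum_le' _ _ hMcard
      intro A hA
      have hAc : Aᶜ.card = n - l := by
        rw [Finset.card_compl, hA, hcard]; omega
      have h1 : ∑ p ∈ B, tensor φ (tensorPow γ m) p ≤ ∑ p ∈ Aᶜ, tensor φ (tensorPow γ m) p :=
        sum_min_le' hmin Aᶜ (by rw [hAc, hBcard])
      have h2 : ∑ p ∈ Aᶜ, tensor φ (tensorPow γ m) p + ∑ p ∈ A, tensor φ (tensorPow γ m) p
          = 1 := by rw [Finset.sum_compl_add_sum, htotφ]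
      have h3 := hBsum φ ⟨k - 1, by omega⟩ (fun j : Fin n => l ≤ (j : ℕ))
      rw [hB] at h1
      rw [h3] at h1
      rw [suffixSum]
      linarith
    have hlb : 1 - suffixSum ψ l * γ ⟨k - 1, by omega⟩ ^ m
        ≤ topSum (tensor ψ (tensorPow γ m)) (n * k ^ m - (n - l)) := by
      have hBc : Bᶜ.card = n * k ^ m - (n - l) := by
        rw [Finset.card_compl, hBcard, hcard]
      have h1 := le_topSum' (tensor ψ (tensorPow γ m)) _ Bᶜ hBc
      have h2 : ∑ p ∈ Bᶜ, tensor ψ (tensorPow γ m) p + ∑ p ∈ B, tensor ψ (tensorPow γ m) p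
          = 1 := by rw [Finset.sum_compl_add_sum, htotψ]
      have h3 := hBsum ψ ⟨k - 1, by omega⟩ (fun j : Fin n => l ≤ (j : ℕ))
      rw [hB, h3] at h2
      rw [suffixSum]
      linarith
    have hmm := hmaj _ hM1 hMcard
    have hps : ∀ x : Fin n → ℝ, (∑ i, x i) = 1 → prefixSum x l + suffixSum x l = 1 := by
      intro x hx
      have hsplit := Finset.sum_filter_add_sum_filter_not Finset.univ
        (fun j : Fin n => (j : ℕ) < l) x
      have hfe : Finset.univ.filter (fun j : Fin n => ¬ (j : ℕ) < l)
          = Finset.univ.filter (fun j : Fin n => l ≤ (j : ℕ)) := by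
        ext j; simp [not_lt]
      rw [hfe, hx] at hsplit
      rw [prefixSum, suffixSum, hsplit]
    have hp : (0:ℝ) < γ ⟨k - 1, by omega⟩ ^ m := pow_pos (hγ0 _) m
    have h6 := hps ψ hψ1
    have h7 := hps φ hφ1
    nlinarith
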